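/- arXiv:1409.4971 — 2 statements merged into one kernel-verified Lean document; each statement's English description precedes it below -/
import Mathlib

section
/- The 2^n-th Walsh–Fejér kernel satisfies: K_{2^n}(x) = 2^{t-1} if x ∈ I_n(e_t) with t < n (i.e. x agrees with e_t in the first n coordinates, where e_t has a 1 only in coordinate t); K_{2^n}(x) = (2^n + 1)/2 if x ∈ I_n; and K_{2^n}(x) = 0 otherwise. -/
open MeasureTheory Filter Topology ENNReal NNReal

noncomputable section

/-- The dyadic group `G = (ℤ/2)^ℕ`. -/
abbrev G : Type := ℕ → ZMod 2

instance : TopologicalSpace (ZMod 2) := ⊥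
instance : DiscreteTopology (ZMod 2) := ⟨rfl⟩
instance : MeasurableSpace G := borel G
instance : BorelSpace G := ⟨rfl⟩

/-- Normalized Haar measure on `G`. -/
def μG : Measure G := Measure.addHaarMeasure ⟨⟨Set.univ, isCompact_univ⟩, by simp⟩

/-- Cylinder `I_n(x) = {y : y_0 = x_0, ..., y_{n-1} = x_{n-1}}`. -/
def cyl (n : ℕ) (x : G) : Set G := {y | ∀ k < n, y k = x k}

/-- `I_n = I_n(0)`. -/
def I₀ (n : ℕ) : Set G := cyl n 0

/-- `e t`: the element of `G` with a single 1 in coordinate `t`. -/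
def e (t : ℕ) : G := fun k => if k = t then 1 else 0

/-- Rademacher functions `r_k(x) = (-1)^{x_k}`. -/
def rade (k : ℕ) (x : G) : ℝ := (-1 : ℝ) ^ (x k).val

/-- Walsh functions `w_n = ∏ r_k^{n_k}` (binary digits `n_k` of `n`). -/
def walsh (n : ℕ) (x : G) : ℝ :=
  ∏ k ∈ Finset.range (n + 1), if n.testBit k then rade k x else 1

/-- Walsh–Dirichlet kernel `D_n = ∑_{k<n} w_k`. -/
def D (n : ℕ) (x : G) : ℝ := ∑ k ∈ Finset.range n, walsh k x

/-- Walsh–Fejér kernel `K_n = (1/n) ∑_{k=1}^n D_k`. -/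
def K (n : ℕ) (x : G) : ℝ := (1 / n) * ∑ k ∈ Finset.Icc 1 n, D k x

/-- Binary variation `V(n) = n_0 + ∑_{k≥1} |n_k - n_{k-1}|`. -/
def V (n : ℕ) : ℕ :=
  (if n.testBit 0 then 1 else 0) +
    ∑ k ∈ Finset.Icc 1 (n + 1), if n.testBit k ≠ n.testBit (k - 1) then 1 else 0

/-- `|n|`: index of the highest nonzero binary digit of `n`. -/
def hi (n : ℕ) : ℕ := Nat.log 2 n

/-- `[n]`: index of the lowest nonzero binary digit of `n`. -/
def lo (n : ℕ) : ℕ := padicValNat 2 n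

/-- `d(n) = |n| - [n]`. -/
def dd (n : ℕ) : ℕ := hi n - lo n

/-- A dyadic martingale: `F n` depends only on the first `n` coordinates, and
`F n` is the average of the two possible extensions, i.e. the martingale property
with respect to the dyadic filtration. -/
def IsDyadicMartingale (F : ℕ → G → ℝ) : Prop :=
  (∀ n x y, (∀ k < n, x k = y k) → F n x = F n y) ∧
  (∀ n x, F n x = (F (n+1) x + F (n+1) (Function.update x n (x n + 1))) / 2)

/-- `k`-th Walsh–Fourier coefficient of a martingale,
`F̂(k) = lim_n ∫ F_n w_k dμ` (the integrals are eventually constant). -/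
def mcoeff (F : ℕ → G → ℝ) (k : ℕ) : ℝ := ∫ x, F (k+1) x * walsh k x ∂μG

/-- Partial sums `S_m F` of the Walsh–Fourier series of a martingale. -/
def S (F : ℕ → G → ℝ) (m : ℕ) (x : G) : ℝ := ∑ j ∈ Finset.range m, mcoeff F j * walsh j x

/-- Fejér means `σ_n F = (1/n) ∑_{k=1}^n S_k F`. -/
def σ (F : ℕ → G → ℝ) (n : ℕ) (x : G) : ℝ := (1 / n) * ∑ k ∈ Finset.Icc 1 n, S F k x

/-- `H_p` quasi-norm of a martingale: `‖sup_n |F_n|‖_{L_p}`. -/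
def HpNorm (p : ℝ) (F : ℕ → G → ℝ) : ℝ≥0∞ :=
  (∫⁻ x, (⨆ n, (‖F n x‖₊ : ℝ≥0∞)) ^ p ∂μG) ^ (1 / p)

/-- Membership in the martingale Hardy space `H_p(G)`. -/
def MemHp (p : ℝ) (F : ℕ → G → ℝ) : Prop := IsDyadicMartingale F ∧ HpNorm p F < ⊤

/-- `L_p` quasi-norm of a function on `G`. -/
def LpN (p : ℝ) (f : G → ℝ) : ℝ≥0∞ := (∫⁻ x, (‖f x‖₊ : ℝ≥0∞) ^ p ∂μG) ^ (1 / p)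

/-- Weak `L_p` quasi-norm: `‖f‖_{L_{p,∞}} = sup_{λ>0} λ μ(|f|>λ)^{1/p}`. -/
def wLp (p : ℝ) (f : G → ℝ) : ℝ≥0∞ :=
  ⨆ t : ℝ≥0, (t : ℝ≥0∞) * (μG {x | (t : ℝ) < |f x|}) ^ (1 / p)

/-- Walsh–Fourier coefficient of an integrable function. -/
def fcoeff (f : G → ℝ) (j : ℕ) : ℝ := ∫ x, f x * walsh j x ∂μG

/-- Partial sums of the Walsh–Fourier series of a function. -/
def Sf (f : G → ℝ) (m : ℕ) (x : G) : ℝ := ∑ j ∈ Finset.range m, fcoeff f j * walsh j x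

/-- Fejér means of the Walsh–Fourier series of a function. -/
def σf (f : G → ℝ) (n : ℕ) (x : G) : ℝ := (1 / n) * ∑ k ∈ Finset.Icc 1 n, Sf f k x

/-- The martingale `(S_{2^m} g)_m` generated by a function `g`; used to interpret the
`H_p` norm of a function such as `σ_n F`. -/
def funMart (g : G → ℝ) : ℕ → G → ℝ := fun m => Sf g (2 ^ m)

/-- Modulus of continuity in `H_p`: `ω_{H_p}(1/2^n, F) = ‖F - S_{2^n} F‖_{H_p}`,
where `F - S_{2^n}F` is the martingale with `m`-th term `F_m - S_{min(2^n, 2^m)}F`. -/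
def ωHp (p : ℝ) (n : ℕ) (F : ℕ → G → ℝ) : ℝ≥0∞ :=
  HpNorm p (fun m x => F m x - S F (min (2 ^ n) (2 ^ m)) x)

/-- The a.e. limit of a martingale (as a limsup, which agrees a.e. with the limit
for martingales in `H_p`). -/
def mLim (F : ℕ → G → ℝ) (x : G) : ℝ := Filter.limsup (fun m => F m x) Filter.atTop

/-- The set `E_l := I_{l+1}(e_{l-1} + e_l)`, with the convention
`I_1(e_{-1}+e_0) = I_2(e_0+e_1)` for `l = 0`. -/
def Eset (l : ℕ) : Set G :=
  if l = 0 then cyl 2 (e 0 + e 1) else cyl (l + 1) (e (l - 1) + e l)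


/-!
Splitting at `2 ^ n` and using `w_{2^n + k} = r_n w_k` for `k < 2^n` gives
`D_{2^n + k} = D_{2^n} + r_n D_k`, hence `D_{2^n} = 2^n 1_{I_n}` and the recursion
`∑_{k ≤ 2^{n+1}} D_k = (1 + r_n) ∑_{k ≤ 2^n} D_k + 2^n D_{2^n}`.
As `1 + r_n` is `2` on `x_n = 0` and `0` on `x_n = 1`, an induction on `n` follows the sum
on `I_n` and on each `I_n(e_t)`, and shows that it vanishes off these cylinders.
-/

open Finset

lemma e_self (t : ℕ) : e t t = 1 := if_pos rfl

lemma e_of_ne {t k : ℕ} (h : k ≠ t) : e t k = 0 := if_neg h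

lemma mem_cyl_succ_iff {n : ℕ} {x y : G} : y ∈ cyl (n + 1) x ↔ y ∈ cyl n x ∧ y n = x n :=
  Nat.forall_lt_succ_right

lemma mem_I₀_succ_iff {n : ℕ} {x : G} : x ∈ I₀ (n + 1) ↔ x ∈ I₀ n ∧ x n = 0 :=
  mem_cyl_succ_iff

lemma cyl_e_self (n : ℕ) : cyl n (e n) = I₀ n := by
  ext x
  exact forall₂_congr fun k hk => by rw [e_of_ne hk.ne, Pi.zero_apply]

lemma notMem_I₀_of_mem_cyl_e {n t : ℕ} {x : G} (ht : t < n) (hx : x ∈ cyl n (e t)) :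
    x ∉ I₀ n := fun h0 => by
  have := (hx t ht).symm.trans (h0 t ht)
  rw [e_self] at this
  exact one_ne_zero this

lemma rade_of_eq_zero {k : ℕ} {x : G} (h : x k = 0) : rade k x = 1 := by
  simp [rade, h]

lemma rade_of_eq_one {k : ℕ} {x : G} (h : x k = 1) : rade k x = -1 := by
  simp [rade, h, ZMod.val_one]

lemma prod_range_testBit_of_le {M : Type*} [CommMonoid M] {m N L : ℕ} (hm : m < 2 ^ N)
    (hNL : N ≤ L) (f : ℕ → M) :
    ∏ k ∈ range L, (if m.testBit k then f k else 1) =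
      ∏ k ∈ range N, (if m.testBit k then f k else 1) := by
  refine (prod_subset (range_subset_range.2 hNL) fun k _ hk => ?_).symm
  have : m < 2 ^ k := hm.trans_le (Nat.pow_le_pow_right two_pos (by simpa using hk))
  rw [Nat.testBit_lt_two_pow this, if_neg Bool.false_ne_true]

lemma prod_range_testBit_congr {M : Type*} [CommMonoid M] {m N L : ℕ} (hN : m < 2 ^ N)
    (hL : m < 2 ^ L) (f : ℕ → M) :
    ∏ k ∈ range L, (if m.testBit k then f k else 1) =
      ∏ k ∈ range N, (if m.testBit k then f k else 1) := by
  rcases le_total N L with h | h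
  · exact prod_range_testBit_of_le hN h f
  · exact (prod_range_testBit_of_le hL h f).symm

lemma walsh_eq_prod_range {m N : ℕ} (hm : m < 2 ^ N) (x : G) :
    walsh m x = ∏ k ∈ range N, if m.testBit k then rade k x else 1 :=
  prod_range_testBit_congr hm (Nat.lt_two_pow_self.trans (Nat.pow_lt_pow_succ one_lt_two)) _

lemma walsh_two_pow_add {n k : ℕ} (hk : k < 2 ^ n) (x : G) :
    walsh (2 ^ n + k) x = rade n x * walsh k x := by
  have hlt : 2 ^ n + k < 2 ^ (n + 1) := by rw [pow_succ]; omega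
  rw [walsh_eq_prod_range hlt, walsh_eq_prod_range hk, prod_range_succ, mul_comm,
    Nat.testBit_two_pow_add_eq, Nat.testBit_lt_two_pow hk, Bool.not_false, if_pos rfl]
  congr 1
  exact prod_congr rfl fun j hj => by rw [Nat.testBit_two_pow_add_gt (mem_range.1 hj)]

lemma D_two_pow_add {n k : ℕ} (hk : k ≤ 2 ^ n) (x : G) :
    D (2 ^ n + k) x = D (2 ^ n) x + rade n x * D k x := by
  rw [D, sum_range_add, D, D, mul_sum]
  exact congrArg _ (sum_congr rfl fun j hj => walsh_two_pow_add (by simp at hj; omega) x)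

lemma D_two_pow (n : ℕ) : D (2 ^ n) = (I₀ n).indicator fun _ => (2 : ℝ) ^ n := by
  induction n with
  | zero => ext x; simp [D, walsh, I₀, cyl]
  | succ n ih =>
    ext x
    rw [pow_succ, mul_two, D_two_pow_add le_rfl, ih]
    by_cases hx : x ∈ I₀ n
    · rcases eq_or_ne (x n) 0 with h | h
      · rw [Set.indicator_of_mem hx, Set.indicator_of_mem (mem_I₀_succ_iff.2 ⟨hx, h⟩),
          rade_of_eq_zero h, pow_succ]
        ring
      · rw [Set.indicator_of_mem hx,
          Set.indicator_of_notMem fun h' => h (mem_I₀_succ_iff.1 h').2,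
          rade_of_eq_one (Fin.eq_one_of_ne_zero _ h)]
        ring
    · rw [Set.indicator_of_notMem hx,
        Set.indicator_of_notMem fun h' => hx (mem_I₀_succ_iff.1 h').1]
      ring

def dirichletSum (m : ℕ) (x : G) : ℝ := ∑ k ∈ range m, D (k + 1) x

lemma K_eq_dirichletSum_div (m : ℕ) (x : G) : K m x = dirichletSum m x / m := by
  rw [K, dirichletSum, ← Ico_add_one_right_eq_Icc, sum_Ico_eq_sum_range, Nat.add_sub_cancel,
    one_div_mul_eq_div]
  simp only [add_comm 1]

lemma dirichletSum_two_pow_add {n k : ℕ} (hk : k ≤ 2 ^ n) (x : G) :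
    dirichletSum (2 ^ n + k) x =
      dirichletSum (2 ^ n) x + k * D (2 ^ n) x + rade n x * dirichletSum k x := by
  rw [dirichletSum, sum_range_add, dirichletSum, dirichletSum, add_assoc, mul_sum]
  have hshift : ∀ j ∈ range k, D (2 ^ n + j + 1) x = D (2 ^ n) x + rade n x * D (j + 1) x :=
    fun j hj => by rw [add_assoc, D_two_pow_add (by simp at hj; omega)]
  rw [sum_congr rfl hshift, sum_add_distrib, sum_const, card_range, nsmul_eq_mul]

lemma dirichletSum_two_pow_succ (n : ℕ) (x : G) :
    dirichletSum (2 ^ (n + 1)) x =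
      (1 + rade n x) * dirichletSum (2 ^ n) x + 2 ^ n * D (2 ^ n) x := by
  rw [pow_succ, mul_two, dirichletSum_two_pow_add le_rfl]
  push_cast
  ring

lemma dirichletSum_two_pow_of_mem_I₀ {n : ℕ} {x : G} (hx : x ∈ I₀ n) :
    dirichletSum (2 ^ n) x = 2 ^ n * (2 ^ n + 1) / 2 := by
  induction n with
  | zero => norm_num [dirichletSum, D, walsh]
  | succ n ih =>
    obtain ⟨hxn, hx0⟩ := mem_I₀_succ_iff.1 hx
    rw [dirichletSum_two_pow_succ, ih hxn, rade_of_eq_zero hx0, D_two_pow,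
      Set.indicator_of_mem hxn]
    ring

lemma dirichletSum_two_pow_of_mem_cyl_e {n t : ℕ} {x : G} (ht : t < n) (hx : x ∈ cyl n (e t)) :
    dirichletSum (2 ^ n) x = 2 ^ n * 2 ^ t / 2 := by
  induction n with
  | zero => exact absurd ht (Nat.not_lt_zero t)
  | succ n ih =>
    obtain ⟨hxn, hx1⟩ := mem_cyl_succ_iff.1 hx
    rw [dirichletSum_two_pow_succ, D_two_pow]
    rcases Nat.lt_succ_iff_lt_or_eq.1 ht with ht | rfl
    · rw [e_of_ne ht.ne'] at hx1
      rw [ih ht hxn, rade_of_eq_zero hx1, Set.indicator_of_notMem (notMem_I₀_of_mem_cyl_e ht hxn)]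
      ring
    · rw [e_self] at hx1
      rw [cyl_e_self] at hxn
      rw [rade_of_eq_one hx1, Set.indicator_of_mem hxn]
      ring

lemma mem_I₀_or_mem_cyl_e_of_dirichletSum_ne_zero {n : ℕ} {x : G}
    (h : dirichletSum (2 ^ n) x ≠ 0) : x ∈ I₀ n ∨ ∃ t < n, x ∈ cyl n (e t) := by
  induction n with
  | zero => exact Or.inl fun k hk => absurd hk (Nat.not_lt_zero k)
  | succ n ih =>
    rw [dirichletSum_two_pow_succ] at h
    by_cases hI : x ∈ I₀ n
    · rcases eq_or_ne (x n) 0 with h0 | h1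
      · exact Or.inl (mem_I₀_succ_iff.2 ⟨hI, h0⟩)
      · refine Or.inr ⟨n, lt_add_one n, mem_cyl_succ_iff.2 ⟨cyl_e_self n ▸ hI, ?_⟩⟩
        rw [e_self]
        exact Fin.eq_one_of_ne_zero _ h1
    · rw [D_two_pow, Set.indicator_of_notMem hI, mul_zero, add_zero] at h
      have h0 : x n = 0 := by
        by_contra h1
        rw [rade_of_eq_one (Fin.eq_one_of_ne_zero _ h1), add_neg_cancel, zero_mul] at h
        exact h rfl
      rcases ih (right_ne_zero_of_mul h) with hI' | ⟨t, ht, hxt⟩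
      · exact absurd hI' hI
      · refine Or.inr ⟨t, ht.trans (lt_add_one n), mem_cyl_succ_iff.2 ⟨hxt, ?_⟩⟩
        rw [e_of_ne ht.ne', h0]

/-- values of the Fejér kernel `K_{2^n}`. -/
theorem fejer_pow_two (n : ℕ) (x : G) :
    (∀ t, t < n → x ∈ cyl n (e t) → K (2 ^ n) x = (2 : ℝ) ^ t / 2) ∧
    (x ∈ I₀ n → K (2 ^ n) x = ((2 : ℝ) ^ n + 1) / 2) ∧
    (x ∉ I₀ n → (∀ t, t < n → x ∉ cyl n (e t)) → K (2 ^ n) x = 0) := by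
  have h2n : (2 : ℝ) ^ n ≠ 0 := by positivity
  simp only [K_eq_dirichletSum_div, Nat.cast_pow, Nat.cast_ofNat]
  refine ⟨fun t ht hx => ?_, fun hx => ?_, fun hI hcyl => ?_⟩
  · rw [dirichletSum_two_pow_of_mem_cyl_e ht hx]
    field_simp
  · rw [dirichletSum_two_pow_of_mem_I₀ hx]
    field_simp
  · by_contra hK
    rcases mem_I₀_or_mem_cyl_e_of_dirichletSum_ne_zero (left_ne_zero_of_mul hK) with
      h | ⟨t, ht, hxt⟩
    exacts [hI h, hcyl t ht hxt]
end
end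

section
/- The complement of I_M in the dyadic group decomposes as the disjoint union Ḡ∖I_M = (⋃_{k=0}^{M−2} ⋃_{l=k+1}^{M−1} I_{l+1}(e_k + e_l)) ∪ (⋃_{k=0}^{M−1} I_M(e_k)). -/
open MeasureTheory Filter Topology ENNReal NNReal

noncomputable section

/-! A point outside `I_M` has a first nonzero coordinate `k < M`. If it has another nonzero
coordinate below `M`, the first such `l` places it in `I_{l+1}(e_k + e_l)`; otherwise it lies in
`I_M(e_k)`. Conversely, each of these cylinders prescribes a nonzero coordinate below `M`. -/

lemma exists_first_ne_zero {α : Type*} [Zero α] {y : ℕ → α} {a b : ℕ}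
    (h : ∃ j, a ≤ j ∧ j < b ∧ y j ≠ 0) :
    ∃ k, a ≤ k ∧ k < b ∧ y k ≠ 0 ∧ ∀ j, a ≤ j → j < k → y j = 0 := by
  classical
  obtain ⟨hak, hkb, hyk⟩ := Nat.find_spec h
  refine ⟨Nat.find h, hak, hkb, hyk, fun j haj hjk => ?_⟩
  by_contra hyj
  exact Nat.find_min h hjk ⟨haj, hjk.trans hkb, hyj⟩

lemma ZMod.eq_one_of_ne_zero_two {a : ZMod 2} (ha : a ≠ 0) : a = 1 :=
  Fin.eq_one_of_ne_zero a ha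

lemma disjoint_cyl_I₀ {n M j : ℕ} {x : G} (hjn : j < n) (hjM : j < M) (hxj : x j ≠ 0) :
    Disjoint (cyl n x) (I₀ M) :=
  Set.disjoint_left.2 fun _ hy h0 => hxj <| (hy j hjn).symm.trans (h0 j hjM)

lemma mem_cyl_e {n k : ℕ} {y : G} (hyk : y k ≠ 0) (h0 : ∀ j < n, j ≠ k → y j = 0) :
    y ∈ cyl n (e k) := by
  intro j hj
  by_cases hjk : j = k
  · subst hjk
    simpa [e] using ZMod.eq_one_of_ne_zero_two hyk
  · simp [e, hjk, h0 j hj hjk]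

lemma mem_cyl_e_add_e {n k l : ℕ} {y : G} (hkl : k ≠ l) (hyk : y k ≠ 0) (hyl : y l ≠ 0)
    (h0 : ∀ j < n, j ≠ k → j ≠ l → y j = 0) : y ∈ cyl n (e k + e l) := by
  intro j hj
  by_cases hjk : j = k
  · subst hjk
    simpa [e, hkl] using ZMod.eq_one_of_ne_zero_two hyk
  by_cases hjl : j = l
  · subst hjl
    simpa [e, hjk] using ZMod.eq_one_of_ne_zero_two hyl
  simp [e, hjk, hjl, h0 j hj hjk hjl]

/-- decomposition of the complement of `I_M`. -/
theorem complement_cylinder_decomposition (M : ℕ) :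
    (I₀ M)ᶜ =
      (⋃ k, ⋃ l, ⋃ (_ : k < l ∧ l < M), cyl (l + 1) (e k + e l)) ∪
      (⋃ k, ⋃ (_ : k < M), cyl M (e k)) := by
  refine Set.Subset.antisymm (fun y hy => ?_) ?_
  · have hne : ∃ j, 0 ≤ j ∧ j < M ∧ y j ≠ 0 := by
      simpa [I₀, cyl] using hy
    obtain ⟨k, -, hkM, hyk, hk0⟩ := exists_first_ne_zero hne
    simp only [Set.mem_union, Set.mem_iUnion]
    by_cases hl : ∃ l, k + 1 ≤ l ∧ l < M ∧ y l ≠ 0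
    · obtain ⟨l, hkl, hlM, hyl, hl0⟩ := exists_first_ne_zero hl
      refine Or.inl ⟨k, l, ⟨hkl, hlM⟩,
        mem_cyl_e_add_e (Nat.ne_of_lt hkl) hyk hyl fun j hj hjk hjl => ?_⟩
      rcases Nat.lt_or_gt_of_ne hjk with hjk | hjk
      · exact hk0 j j.zero_le hjk
      · exact hl0 j hjk (by omega)
    · refine Or.inr ⟨k, hkM, mem_cyl_e hyk fun j hj hjk => ?_⟩
      rcases Nat.lt_or_gt_of_ne hjk with hjk | hjk
      · exact hk0 j j.zero_le hjk
      · by_contra hyj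
        exact hl ⟨j, hjk, hj, hyj⟩
  · refine Set.union_subset (Set.iUnion₂_subset fun k l => Set.iUnion_subset fun hkl => ?_)
      (Set.iUnion₂_subset fun k hkM => ?_) <;> rw [Set.subset_compl_iff_disjoint_right]
    · exact disjoint_cyl_I₀ l.lt_succ_self hkl.2 (by simp [e, hkl.1.ne'])
    · exact disjoint_cyl_I₀ hkM hkM (by simp [e])
end
end
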